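/- arXiv:1806.05345 — 2 statements merged into one kernel-verified Lean document; each statement's English description precedes it below -/
import Mathlib

section
/- Fix g ≥ 2. Let A = [[1,1],[0,1]], B = [[1,0],[-1,1]] in M₂(ℚ), and let C ∈ M₄(ℚ) be the matrix with rows (1,0,0,0), (−1,1,1,0), (0,0,1,0), (1,0,−1,1). Define matrices Z₁,…,Z_{2g+1} ∈ M_{2g}(ℚ) by: Z_{2l} = I_{2l−2} ⊕ A ⊕ I_{2g−2l} for 1 ≤ l ≤ g; Z₁ = B ⊕ I_{2g−2}; Z_{2g+1} = I_{2g−2} ⊕ B; and Z_{2l+1} = I_{2l−2} ⊕ C ⊕ I_{2g−2l−2} for 1 ≤ l ≤ g−1. Then the space of matrices P ∈ M_{2g}(ℚ) satisfying Z_i P Z_iᵀ = P and Z_iᵀ P Z_i = P for all i = 1,…,2g+1 is one-dimensional, spanned by the block diagonal matrix J ⊕ J ⊕ ⋯ ⊕ J (g blocks), where J = [[0,−1],[1,0]]. -/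
/-!
Each `Zᵢ` is a rank-one perturbation `1 + u vᵀ` of the identity, with `u` and `v` signed sums of
standard basis vectors, and `Ω = J ⊕ ⋯ ⊕ J` satisfies `Ω u = v`, `Ω v = -u`. As `Ω` is
antisymmetric, this is exactly what makes both congruences by `Zᵢ` fix `Ω`.

Conversely, invariance under the `Z_{2l}` forces an invariant `P` to vanish outside the diagonal
`2 × 2` blocks and to be antisymmetric on them, and invariance under `Z_{2l+1}` forces consecutive
blocks to agree. So an invariant `P` with vanishing `(1, 0)` entry is zero; apply this to
`P - P₁₀ • Ω`.
-/

open Matrix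

/-- The block-diagonal embedding `I_o ⊕ M ⊕ I_{2g-o-k}` of a `k × k` matrix `M` at offset `o`
inside `M_{2g}(ℚ)`: identity outside the block occupied by `M`. -/
def embedBlock (g k : ℕ) (M : Matrix (Fin k) (Fin k) ℚ) (o : ℕ) :
    Matrix (Fin (2 * g)) (Fin (2 * g)) ℚ :=
  fun i j =>
    if hi : o ≤ i.val ∧ i.val < o + k then
      if hj : o ≤ j.val ∧ j.val < o + k then
        M ⟨i.val - o, by omega⟩ ⟨j.val - o, by omega⟩
      else 0
    else if i = j then 1 else 0

/-- The images `Z₁, …, Z_{2g+1}` of the Birman–Hilden generators of the hyperelliptic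
mapping class group under the symplectic representation:
`Z_{2l} = I_{2l-2} ⊕ A ⊕ I_{2g-2l}` (`1 ≤ l ≤ g`), `Z₁ = B ⊕ I_{2g-2}`,
`Z_{2g+1} = I_{2g-2} ⊕ B`, `Z_{2l+1} = I_{2l-2} ⊕ C ⊕ I_{2g-2l-2}` (`1 ≤ l ≤ g-1`). -/
def birmanHildenZ (g : ℕ) (i : ℕ) : Matrix (Fin (2 * g)) (Fin (2 * g)) ℚ :=
  if i = 1 then embedBlock g 2 !![1, 0; -1, 1] 0
  else if i = 2 * g + 1 then embedBlock g 2 !![1, 0; -1, 1] (2 * g - 2)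
  else if i % 2 = 0 then embedBlock g 2 !![1, 1; 0, 1] (i - 2)
  else embedBlock g 4 !![1, 0, 0, 0; -1, 1, 1, 0; 0, 0, 1, 0; 1, 0, -1, 1] (i - 3)

/-- The block diagonal matrix `J ⊕ J ⊕ ⋯ ⊕ J` (`g` blocks) with `J = [[0,-1],[1,0]]`. -/
def blockJ (g : ℕ) : Matrix (Fin (2 * g)) (Fin (2 * g)) ℚ :=
  fun i j =>
    if i.val / 2 = j.val / 2 then
      (!![0, -1; 1, 0] : Matrix (Fin 2) (Fin 2) ℚ) ⟨i.val % 2, by omega⟩ ⟨j.val % 2, by omega⟩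
    else 0

section CongrInvariant

variable {n R : Type*} [Fintype n] [CommRing R]

def IsCongrInvariant (Z P : Matrix n n R) : Prop :=
  Z * P * Zᵀ = P ∧ Zᵀ * P * Z = P

theorem IsCongrInvariant.sub {Z P Q : Matrix n n R} (hP : IsCongrInvariant Z P)
    (hQ : IsCongrInvariant Z Q) : IsCongrInvariant Z (P - Q) := by
  constructor <;> simp only [mul_sub, sub_mul, hP.1, hP.2, hQ.1, hQ.2]

theorem IsCongrInvariant.smul {Z P : Matrix n n R} (hP : IsCongrInvariant Z P) (c : R) :
    IsCongrInvariant Z (c • P) := by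
  constructor <;> simp only [mul_smul_comm, smul_mul_assoc, hP.1, hP.2]

theorem vecMul_eq_neg_mulVec {Ω : Matrix n n R} (hΩ : Ωᵀ = -Ω) (v : n → R) :
    v ᵥ* Ω = -(Ω *ᵥ v) := by
  rw [← vecMul_transpose, hΩ, vecMul_neg, neg_neg]

theorem vecMul_dotProduct_self_eq_zero [NoZeroDivisors R] [CharZero R] {Ω : Matrix n n R}
    (hΩ : Ωᵀ = -Ω) (v : n → R) : v ᵥ* Ω ⬝ᵥ v = 0 := by
  refine add_self_eq_zero.mp ?_
  nth_rewrite 1 [vecMul_eq_neg_mulVec hΩ]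
  rw [neg_dotProduct, dotProduct_comm, dotProduct_mulVec, neg_add_cancel]

variable [DecidableEq n]

theorem one_add_vecMulVec_mul_mul_transpose (u v : n → R) (P : Matrix n n R) :
    (1 + vecMulVec u v) * P * (1 + vecMulVec u v)ᵀ =
      P + vecMulVec u (v ᵥ* P) + vecMulVec (P *ᵥ v) u + (v ᵥ* P ⬝ᵥ v) • vecMulVec u u := by
  rw [transpose_add, transpose_one, transpose_vecMulVec, add_mul, one_mul, vecMulVec_mul,
    mul_add, mul_one, add_mul, vecMulVec_mul_vecMulVec, mul_vecMulVec, vecMulVec_smul]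
  abel

theorem one_add_vecMulVec_mul_mul_transpose_eq_self [NoZeroDivisors R] [CharZero R]
    {Ω : Matrix n n R} (hΩ : Ωᵀ = -Ω) {u v : n → R} {k : R} (h : Ω *ᵥ v = k • u) :
    (1 + vecMulVec u v) * Ω * (1 + vecMulVec u v)ᵀ = Ω := by
  rw [one_add_vecMulVec_mul_mul_transpose, vecMul_dotProduct_self_eq_zero hΩ,
    vecMul_eq_neg_mulVec hΩ, h, vecMulVec_neg, vecMulVec_smul, smul_vecMulVec, zero_smul]
  abel

theorem isCongrInvariant_one_add_vecMulVec [NoZeroDivisors R] [CharZero R]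
    {Ω : Matrix n n R} (hΩ : Ωᵀ = -Ω) {u v : n → R} (hu : Ω *ᵥ u = v) (hv : Ω *ᵥ v = -u) :
    IsCongrInvariant (1 + vecMulVec u v) Ω := by
  refine ⟨one_add_vecMulVec_mul_mul_transpose_eq_self hΩ (k := -1) (by rw [hv, neg_one_smul]), ?_⟩
  have := one_add_vecMulVec_mul_mul_transpose_eq_self hΩ (u := v) (v := u) (k := 1)
    (by rw [hu, one_smul])
  simpa only [transpose_add, transpose_one, transpose_vecMulVec] using this

theorem apply_eq_zero_of_one_add_single_mul_mul_transpose {a b : n} (hab : a ≠ b)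
    {P : Matrix n n R}
    (h : (1 + vecMulVec (Pi.single a 1) (Pi.single b 1)) * P
      * (1 + vecMulVec (Pi.single a 1) (Pi.single b 1))ᵀ = P) :
    (∀ j ≠ a, P b j = 0) ∧ P a b + P b a = 0 := by
  rw [one_add_vecMulVec_mul_mul_transpose, single_one_vecMul, mulVec_single_one,
    dotProduct_single_one] at h
  have entry_a : ∀ j,
      P b j + P a b * (Pi.single a 1 : n → R) j + P b b * (Pi.single a 1 : n → R) j = 0 := by
    intro j
    have := congrFun (congrFun h a) j
    simp only [Matrix.add_apply, Matrix.smul_apply, vecMulVec_apply, Pi.single_eq_same,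
      row_apply, col_apply, one_mul, smul_eq_mul] at this
    linear_combination this
  have row_b : ∀ j ≠ a, P b j = 0 := fun j hj => by
    simpa [Pi.single_apply, hj] using entry_a j
  refine ⟨row_b, ?_⟩
  have := entry_a a
  rw [row_b b hab.symm, Pi.single_eq_same] at this
  linear_combination this

theorem IsCongrInvariant.apply_eq_zero_of_single {a b : n} (hab : a ≠ b) {P : Matrix n n R}
    (h : IsCongrInvariant (1 + vecMulVec (Pi.single a 1) (Pi.single b 1)) P) :
    (∀ j ≠ b, P a j = 0) ∧ (∀ j ≠ a, P b j = 0) ∧ P a b + P b a = 0 := by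
  obtain ⟨row_b, hanti⟩ := apply_eq_zero_of_one_add_single_mul_mul_transpose hab h.1
  obtain ⟨row_a, -⟩ := apply_eq_zero_of_one_add_single_mul_mul_transpose hab.symm (P := P) (by
    simpa only [transpose_add, transpose_one, transpose_vecMulVec] using h.2)
  exact ⟨row_a, row_b, hanti⟩

theorem apply_add_apply_of_one_add_vecMulVec_mul_mul_transpose {a b c d : n} (hbd : b ≠ d)
    {P : Matrix n n R}
    (h : (1 + vecMulVec (Pi.single d 1 - Pi.single b 1) (Pi.single a 1 - Pi.single c 1)) * P
      * (1 + vecMulVec (Pi.single d 1 - Pi.single b 1) (Pi.single a 1 - Pi.single c 1))ᵀ = P) :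
    P c d + P b a = P a d + P b c + (P a a - P a c - P c a + P c c) := by
  have := congrFun (congrFun h b) d
  rw [one_add_vecMulVec_mul_mul_transpose] at this
  simp only [sub_vecMul, single_one_vecMul, mulVec_sub, mulVec_single_one, dotProduct_sub,
    dotProduct_single_one, Pi.sub_apply, row_apply, col_apply, Matrix.add_apply,
    Matrix.smul_apply, vecMulVec_apply, Pi.single_eq_of_ne hbd, Pi.single_eq_of_ne hbd.symm,
    Pi.single_eq_same, smul_eq_mul] at this
  linear_combination this

end CongrInvariant

section BirmanHilden

variable {g : ℕ}

theorem matA_apply (p q : Fin 2) :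
    (!![1, 1; 0, 1] : Matrix (Fin 2) (Fin 2) ℚ) p q = if p.val ≤ q.val then 1 else 0 := by
  fin_cases p <;> fin_cases q <;> simp

theorem matB_apply (p q : Fin 2) :
    (!![1, 0; -1, 1] : Matrix (Fin 2) (Fin 2) ℚ) p q =
      if p = q then 1 else if p.val = 1 ∧ q.val = 0 then -1 else 0 := by
  fin_cases p <;> fin_cases q <;> simp

theorem matC_apply (p q : Fin 4) :
    (!![1, 0, 0, 0; -1, 1, 1, 0; 0, 0, 1, 0; 1, 0, -1, 1] : Matrix (Fin 4) (Fin 4) ℚ) p q =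
      if p = q then 1
      else if p.val = 1 ∧ q.val = 0 then -1
      else if p.val = 1 ∧ q.val = 2 then 1
      else if p.val = 3 ∧ q.val = 0 then 1
      else if p.val = 3 ∧ q.val = 2 then -1 else 0 := by
  fin_cases p <;> fin_cases q <;> simp

theorem embedBlock_matA {a b : Fin (2 * g)} (hb : b.val = a.val + 1) :
    embedBlock g 2 !![1, 1; 0, 1] a = 1 + vecMulVec (Pi.single a 1) (Pi.single b 1) := by
  ext i j
  simp only [embedBlock, matA_apply, Matrix.add_apply, one_apply, vecMulVec_apply,
    Pi.single_apply, Fin.ext_iff, hb]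
  split_ifs <;> norm_num <;> omega

theorem embedBlock_matB {a b : Fin (2 * g)} (hb : b.val = a.val + 1) :
    embedBlock g 2 !![1, 0; -1, 1] a = 1 + vecMulVec (-Pi.single b 1) (Pi.single a 1) := by
  ext i j
  simp only [embedBlock, matB_apply, Matrix.add_apply, one_apply, vecMulVec_apply,
    Pi.neg_apply, Pi.single_apply, Fin.ext_iff, hb]
  split_ifs <;> norm_num <;> omega

theorem embedBlock_matC {a b c d : Fin (2 * g)} (hb : b.val = a.val + 1)
    (hc : c.val = a.val + 2) (hd : d.val = a.val + 3) :
    embedBlock g 4 !![1, 0, 0, 0; -1, 1, 1, 0; 0, 0, 1, 0; 1, 0, -1, 1] a =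
      1 + vecMulVec (Pi.single d 1 - Pi.single b 1) (Pi.single a 1 - Pi.single c 1) := by
  ext i j
  simp only [embedBlock, matC_apply, Matrix.add_apply, one_apply, vecMulVec_apply,
    Pi.sub_apply, Pi.single_apply, Fin.ext_iff, hb, hc, hd]
  split_ifs <;> norm_num <;> omega

theorem blockJ_apply (i j : Fin (2 * g)) :
    blockJ g i j = if i.val = j.val + 1 ∧ j.val % 2 = 0 then 1
      else if j.val = i.val + 1 ∧ i.val % 2 = 0 then -1 else 0 := by
  have matJ_apply : ∀ p q : Fin 2, (!![0, -1; 1, 0] : Matrix (Fin 2) (Fin 2) ℚ) p q =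
      if p.val = 1 ∧ q.val = 0 then 1 else if p.val = 0 ∧ q.val = 1 then -1 else 0 := by
    intro p q; fin_cases p <;> fin_cases q <;> simp
  simp only [blockJ, matJ_apply]
  split_ifs <;> norm_num <;> omega

theorem blockJ_transpose : (blockJ g)ᵀ = -blockJ g := by
  ext i j
  simp only [transpose_apply, Matrix.neg_apply, blockJ_apply]
  split_ifs <;> first | omega | norm_num

theorem blockJ_one_zero (h : 1 < 2 * g) : blockJ g ⟨1, h⟩ ⟨0, by omega⟩ = 1 := by
  simp [blockJ_apply]

theorem blockJ_mulVec_single_of_even {a b : Fin (2 * g)} (ha : a.val % 2 = 0)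
    (hb : b.val = a.val + 1) : blockJ g *ᵥ Pi.single a 1 = Pi.single b 1 := by
  ext i
  simp only [mulVec_single_one, col_apply, blockJ_apply, Pi.single_apply, Fin.ext_iff, hb]
  split_ifs <;> first | rfl | omega

theorem blockJ_mulVec_single_of_odd {a b : Fin (2 * g)} (ha : a.val % 2 = 0)
    (hb : b.val = a.val + 1) : blockJ g *ᵥ Pi.single b 1 = -Pi.single a 1 := by
  ext i
  simp only [mulVec_single_one, col_apply, Pi.neg_apply, blockJ_apply, Pi.single_apply,
    Fin.ext_iff, hb]
  split_ifs <;> norm_num <;> omega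

theorem birmanHildenZ_one {a b : Fin (2 * g)} (ha : a.val = 0) (hb : b.val = 1) :
    birmanHildenZ g 1 = 1 + vecMulVec (-Pi.single b 1) (Pi.single a 1) := by
  have h := embedBlock_matB (a := a) (b := b) (by omega)
  rw [ha] at h
  rw [birmanHildenZ, if_pos rfl, h]

theorem birmanHildenZ_two_mul_add_one {a b : Fin (2 * g)} (hb : b.val = a.val + 1)
    (hlast : b.val + 1 = 2 * g) :
    birmanHildenZ g (2 * g + 1) = 1 + vecMulVec (-Pi.single b 1) (Pi.single a 1) := by
  rw [birmanHildenZ, if_neg (by omega), if_pos rfl, show 2 * g - 2 = a.val by omega,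
    embedBlock_matB hb]

theorem birmanHildenZ_of_even {a b : Fin (2 * g)} (ha : a.val % 2 = 0)
    (hb : b.val = a.val + 1) :
    birmanHildenZ g (a.val + 2) = 1 + vecMulVec (Pi.single a 1) (Pi.single b 1) := by
  rw [birmanHildenZ, if_neg (by omega), if_neg (by omega), if_pos (by omega),
    Nat.add_sub_cancel, embedBlock_matA hb]

theorem birmanHildenZ_of_odd {a b c d : Fin (2 * g)} (ha : a.val % 2 = 0)
    (hb : b.val = a.val + 1) (hc : c.val = a.val + 2) (hd : d.val = a.val + 3) :
    birmanHildenZ g (a.val + 3) =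
      1 + vecMulVec (Pi.single d 1 - Pi.single b 1) (Pi.single a 1 - Pi.single c 1) := by
  rw [birmanHildenZ, if_neg (by omega), if_neg (by omega), if_neg (by omega),
    Nat.add_sub_cancel, embedBlock_matC hb hc hd]

def IsBirmanHildenInvariant (g : ℕ) (P : Matrix (Fin (2 * g)) (Fin (2 * g)) ℚ) : Prop :=
  ∀ i, 1 ≤ i → i ≤ 2 * g + 1 → IsCongrInvariant (birmanHildenZ g i) P

theorem IsBirmanHildenInvariant.sub {P Q : Matrix (Fin (2 * g)) (Fin (2 * g)) ℚ}
    (hP : IsBirmanHildenInvariant g P) (hQ : IsBirmanHildenInvariant g Q) :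
    IsBirmanHildenInvariant g (P - Q) :=
  fun i hi1 hi2 => (hP i hi1 hi2).sub (hQ i hi1 hi2)

theorem isCongrInvariant_blockJ_of_single {a b : Fin (2 * g)} (ha : a.val % 2 = 0)
    (hb : b.val = a.val + 1) :
    IsCongrInvariant (1 + vecMulVec (Pi.single a 1) (Pi.single b 1)) (blockJ g) :=
  isCongrInvariant_one_add_vecMulVec blockJ_transpose (blockJ_mulVec_single_of_even ha hb)
    (blockJ_mulVec_single_of_odd ha hb)

theorem isCongrInvariant_blockJ_of_neg_single {a b : Fin (2 * g)} (ha : a.val % 2 = 0)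
    (hb : b.val = a.val + 1) :
    IsCongrInvariant (1 + vecMulVec (-Pi.single b 1) (Pi.single a 1)) (blockJ g) :=
  isCongrInvariant_one_add_vecMulVec blockJ_transpose
    (by rw [mulVec_neg, blockJ_mulVec_single_of_odd ha hb, neg_neg])
    (by rw [blockJ_mulVec_single_of_even ha hb, neg_neg])

theorem isCongrInvariant_blockJ_of_sub_single {a b c d : Fin (2 * g)} (ha : a.val % 2 = 0)
    (hb : b.val = a.val + 1) (hc : c.val = a.val + 2) (hd : d.val = a.val + 3) :
    IsCongrInvariant
      (1 + vecMulVec (Pi.single d 1 - Pi.single b 1) (Pi.single a 1 - Pi.single c 1))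
      (blockJ g) := by
  have hc2 : c.val % 2 = 0 := by omega
  have hd' : d.val = c.val + 1 := by omega
  refine isCongrInvariant_one_add_vecMulVec blockJ_transpose ?_ ?_
  · rw [mulVec_sub, blockJ_mulVec_single_of_odd hc2 hd', blockJ_mulVec_single_of_odd ha hb]
    abel
  · rw [mulVec_sub, blockJ_mulVec_single_of_even ha hb, blockJ_mulVec_single_of_even hc2 hd']
    abel

theorem isBirmanHildenInvariant_smul_blockJ (hg : 1 ≤ g) (c : ℚ) :
    IsBirmanHildenInvariant g (c • blockJ g) := by
  intro i hi1 hi2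
  refine IsCongrInvariant.smul ?_ c
  have fin : ∀ k < 2 * g, ∃ x : Fin (2 * g), x.val = k := fun k hk => ⟨⟨k, hk⟩, rfl⟩
  by_cases hfirst : i = 1
  · obtain ⟨a, ha⟩ := fin 0 (by omega)
    obtain ⟨b, hb⟩ := fin 1 (by omega)
    rw [hfirst, birmanHildenZ_one ha hb]
    exact isCongrInvariant_blockJ_of_neg_single (by omega) (by omega)
  by_cases hlast : i = 2 * g + 1
  · obtain ⟨a, ha⟩ := fin (2 * g - 2) (by omega)
    obtain ⟨b, hb⟩ := fin (2 * g - 1) (by omega)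
    rw [hlast, birmanHildenZ_two_mul_add_one (a := a) (b := b) (by omega) (by omega)]
    exact isCongrInvariant_blockJ_of_neg_single (by omega) (by omega)
  rcases Nat.mod_two_eq_zero_or_one i with heven | hodd
  · obtain ⟨a, ha⟩ := fin (i - 2) (by omega)
    obtain ⟨b, hb⟩ := fin (i - 1) (by omega)
    obtain rfl : i = a.val + 2 := by omega
    rw [birmanHildenZ_of_even (b := b) (by omega) (by omega)]
    exact isCongrInvariant_blockJ_of_single (by omega) (by omega)
  · obtain ⟨a, ha⟩ := fin (i - 3) (by omega)
    obtain ⟨b, hb⟩ := fin (i - 2) (by omega)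
    obtain ⟨c, hc⟩ := fin (i - 1) (by omega)
    obtain ⟨d, hd⟩ := fin i (by omega)
    obtain rfl : i = a.val + 3 := by omega
    rw [birmanHildenZ_of_odd (b := b) (c := c) (d := d) (by omega) (by omega) (by omega)
      (by omega)]
    exact isCongrInvariant_blockJ_of_sub_single (by omega) (by omega) (by omega) (by omega)

theorem IsBirmanHildenInvariant.block_entries {P : Matrix (Fin (2 * g)) (Fin (2 * g)) ℚ}
    (hP : IsBirmanHildenInvariant g P) {a b : Fin (2 * g)} (ha : a.val % 2 = 0)
    (hb : b.val = a.val + 1) :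
    (∀ j ≠ b, P a j = 0) ∧ (∀ j ≠ a, P b j = 0) ∧ P a b + P b a = 0 := by
  have h := hP (a.val + 2) (by omega) (by omega)
  rw [birmanHildenZ_of_even ha hb] at h
  exact h.apply_eq_zero_of_single (Fin.ne_of_val_ne (by omega))

theorem IsBirmanHildenInvariant.apply_next_block_eq
    {P : Matrix (Fin (2 * g)) (Fin (2 * g)) ℚ} (hP : IsBirmanHildenInvariant g P)
    {a b c d : Fin (2 * g)} (ha : a.val % 2 = 0) (hb : b.val = a.val + 1)
    (hc : c.val = a.val + 2) (hd : d.val = a.val + 3) : P d c = P b a := by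
  have h := hP (a.val + 3) (by omega) (by omega)
  rw [birmanHildenZ_of_odd ha hb hc hd] at h
  have key := apply_add_apply_of_one_add_vecMulVec_mul_mul_transpose
    (Fin.ne_of_val_ne (by omega)) h.1
  obtain ⟨row_a, row_b, -⟩ := hP.block_entries ha hb
  obtain ⟨row_c, -, hcd⟩ := hP.block_entries (a := c) (b := d) (by omega) (by omega)
  rw [row_a d (Fin.ne_of_val_ne (by omega)), row_b c (Fin.ne_of_val_ne (by omega)),
    row_a a (Fin.ne_of_val_ne (by omega)), row_a c (Fin.ne_of_val_ne (by omega)),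
    row_c a (Fin.ne_of_val_ne (by omega)), row_c c (Fin.ne_of_val_ne (by omega))] at key
  linear_combination hcd - key

theorem IsBirmanHildenInvariant.eq_zero (hg : 1 ≤ g)
    {P : Matrix (Fin (2 * g)) (Fin (2 * g)) ℚ} (hP : IsBirmanHildenInvariant g P)
    (h : P ⟨1, by omega⟩ ⟨0, by omega⟩ = 0) : P = 0 := by
  have lower : ∀ l, ∀ a b : Fin (2 * g), a.val = 2 * l → b.val = a.val + 1 → P b a = 0 := by
    intro l
    induction l with
    | zero =>
      intro a b ha hb
      rwa [show a = ⟨0, by omega⟩ from Fin.ext ha,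
        show b = ⟨1, by omega⟩ from Fin.ext (by rw [hb, ha])]
    | succ l ih =>
      intro c d hc hd
      obtain ⟨a, ha⟩ : ∃ a : Fin (2 * g), a.val = 2 * l := ⟨⟨_, by omega⟩, rfl⟩
      obtain ⟨b, hb⟩ : ∃ b : Fin (2 * g), b.val = a.val + 1 := ⟨⟨_, by omega⟩, rfl⟩
      rw [hP.apply_next_block_eq (a := a) (b := b) (by omega) hb (by omega) (by omega)]
      exact ih a b ha hb
  ext i j
  obtain ⟨a, ha⟩ : ∃ a : Fin (2 * g), a.val = 2 * (i.val / 2) := ⟨⟨_, by omega⟩, rfl⟩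
  obtain ⟨b, hb⟩ : ∃ b : Fin (2 * g), b.val = a.val + 1 := ⟨⟨_, by omega⟩, rfl⟩
  obtain ⟨row_a, row_b, hab⟩ := hP.block_entries (by omega) hb
  have hba : P b a = 0 := lower (i.val / 2) a b ha hb
  rw [Matrix.zero_apply]
  obtain rfl | rfl : i = a ∨ i = b := by simp only [Fin.ext_iff]; omega
  · by_cases hj : j = b
    · rw [hj]
      linear_combination hab - hba
    · exact row_a j hj
  · by_cases hj : j = a
    · rw [hj, hba]
    · exact row_b j hj

end BirmanHilden

/-- For `g ≥ 2`, the space of matrices `P ∈ M_{2g}(ℚ)` satisfying `Zᵢ P Zᵢᵀ = P` and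
`Zᵢᵀ P Zᵢ = P` for all the Birman–Hilden matrices `Z₁, …, Z_{2g+1}` is one-dimensional,
spanned by the nonzero block diagonal matrix `J ⊕ ⋯ ⊕ J`. -/
theorem birmanHilden_invariants (g : ℕ) (hg : 2 ≤ g) :
    {P : Matrix (Fin (2 * g)) (Fin (2 * g)) ℚ |
        ∀ i : ℕ, 1 ≤ i → i ≤ 2 * g + 1 →
          birmanHildenZ g i * P * (birmanHildenZ g i)ᵀ = P ∧
          (birmanHildenZ g i)ᵀ * P * birmanHildenZ g i = P} =
      Set.range (fun c : ℚ => c • blockJ g) ∧ blockJ g ≠ 0 := by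
  have hg1 : 1 ≤ g := by omega
  refine ⟨Set.ext fun P => ⟨fun hP => ?_, ?_⟩, fun h => ?_⟩
  · set c := P ⟨1, by omega⟩ ⟨0, by omega⟩
    have hdiff := (isBirmanHildenInvariant_smul_blockJ hg1 c).sub hP
    refine ⟨c, sub_eq_zero.mp (hdiff.eq_zero hg1 ?_)⟩
    rw [Matrix.sub_apply, Matrix.smul_apply, blockJ_one_zero, smul_eq_mul, mul_one, sub_self]
  · rintro ⟨c, rfl⟩
    exact isBirmanHildenInvariant_smul_blockJ hg1 c
  · simpa [h] using blockJ_one_zero (g := g) (by omega)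
end

section
/- Let W be a ℚ-vector space and let w₁,…,w_m ∈ W be linearly independent. Let V = ℚ^m with standard basis e₁,…,e_m. Then the linear map φ : Λ²V → W ⊗ V determined by φ(eᵢ ∧ eⱼ) = wᵢ ⊗ eⱼ − wⱼ ⊗ eᵢ is injective. -/
open TensorProduct

section aux

variable (m : ℕ)

/-- The basis wedge elements of the second exterior power of `ℚ^m`. -/
noncomputable def wedgeE (i j : Fin m) : ⋀[ℚ]^2 (Fin m → ℚ) :=
  ⟨ExteriorAlgebra.ιMulti ℚ 2 ![Pi.single i 1, Pi.single j 1],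
    ExteriorAlgebra.ιMulti_range ℚ 2 (Set.mem_range_self _)⟩

lemma wedgeE_antisymm (i j : Fin m) : wedgeE m j i = - wedgeE m i j := by
  apply Subtype.ext
  show (ExteriorAlgebra.ιMulti ℚ 2) ![Pi.single j 1, Pi.single i 1]
      = -((ExteriorAlgebra.ιMulti ℚ 2) ![Pi.single i 1, Pi.single j 1])
  have := AlternatingMap.map_swap (ExteriorAlgebra.ιMulti ℚ 2 (M := Fin m → ℚ))
    (![(Pi.single i 1 : Fin m → ℚ), Pi.single j 1]) (i := (0 : Fin 2)) (j := 1) (by decide)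
  rw [← this]
  congr 1
  funext k
  fin_cases k <;> rfl

lemma wedge_spans (x : ⋀[ℚ]^2 (Fin m → ℚ)) :
    ∃ c : Fin m × Fin m → ℚ, x = ∑ p : Fin m × Fin m, c p • wedgeE m p.1 p.2 := by
  have hmem : (x : ExteriorAlgebra ℚ (Fin m → ℚ)) ∈ Submodule.span ℚ
      (Set.range fun p : Fin m × Fin m =>
        ExteriorAlgebra.ιMulti ℚ 2 ![(Pi.single p.1 1 : Fin m → ℚ), Pi.single p.2 1]) := by
    have hx : (x : ExteriorAlgebra ℚ (Fin m → ℚ)) ∈ Submodule.span ℚ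
        (Set.range (ExteriorAlgebra.ιMulti ℚ 2 (M := Fin m → ℚ))) := by
      rw [ExteriorAlgebra.ιMulti_span_fixedDegree ℚ 2]
      exact x.2
    refine Submodule.span_le.2 ?_ hx
    rintro _ ⟨v, rfl⟩
    have hv : v = fun k => ∑ i : Fin m, v k i • (Pi.single i 1 : Fin m → ℚ) := by
      funext k
      have : ∑ i : Fin m, v k i • (Pi.single i 1 : Fin m → ℚ)
          = ∑ i : Fin m, Pi.single i (v k i) := by
        refine Finset.sum_congr rfl fun i _ => ?_
        rw [← Pi.single_smul, smul_eq_mul, mul_one]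
      rw [this, Finset.univ_sum_single]
    rw [hv]
    have := MultilinearMap.map_sum (ExteriorAlgebra.ιMulti ℚ 2 (M := Fin m → ℚ)).toMultilinearMap
      (g := fun k i => v k i • (Pi.single i 1 : Fin m → ℚ))
    simp only [AlternatingMap.coe_multilinearMap] at this
    rw [this]
    refine Submodule.sum_mem _ fun r _ => ?_
    have hsm := MultilinearMap.map_smul_univ
      (ExteriorAlgebra.ιMulti ℚ 2 (M := Fin m → ℚ)).toMultilinearMap
      (fun k => v k (r k)) (fun k => (Pi.single (r k) 1 : Fin m → ℚ))
    simp only [AlternatingMap.coe_multilinearMap] at hsm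
    rw [hsm]
    have hre : (fun k => (Pi.single (r k) 1 : Fin m → ℚ))
        = ![Pi.single (r 0) 1, Pi.single (r 1) 1] := by
      funext k
      fin_cases k <;> rfl
    rw [hre]
    exact Submodule.smul_mem _ _ (Submodule.subset_span ⟨(r 0, r 1), rfl⟩)
  obtain ⟨c, hc⟩ := (Submodule.mem_span_range_iff_exists_fun ℚ).1 hmem
  refine ⟨c, ?_⟩
  apply Subtype.ext
  rw [← hc]
  push_cast
  rfl

end aux

/-- Let `w₁, …, w_m` be linearly independent vectors of a `ℚ`-vector space `W`, and let
`V = ℚ^m` with standard basis `e₁, …, e_m`. Any linear map `φ : Λ²V → W ⊗ V` with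
`φ(eᵢ ∧ eⱼ) = wᵢ ⊗ eⱼ − wⱼ ⊗ eᵢ` is injective. -/
theorem exterior_square_map_injective (W : Type*) [AddCommGroup W] [Module ℚ W]
    (m : ℕ) (w : Fin m → W) (hw : LinearIndependent ℚ w)
    (φ : ⋀[ℚ]^2 (Fin m → ℚ) →ₗ[ℚ] W ⊗[ℚ] (Fin m → ℚ))
    (hφ : ∀ i j : Fin m,
      φ ⟨ExteriorAlgebra.ιMulti ℚ 2 ![Pi.single i 1, Pi.single j 1],
          ExteriorAlgebra.ιMulti_range ℚ 2 (Set.mem_range_self _)⟩ =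
        w i ⊗ₜ[ℚ] (Pi.single j 1 : Fin m → ℚ) - w j ⊗ₜ[ℚ] (Pi.single i 1 : Fin m → ℚ)) :
    Function.Injective φ := by
  have hφ' : ∀ i j, φ (wedgeE m i j) =
      w i ⊗ₜ[ℚ] (Pi.single j 1 : Fin m → ℚ) - w j ⊗ₜ[ℚ] (Pi.single i 1 : Fin m → ℚ) := hφ
  rw [← LinearMap.ker_eq_bot, LinearMap.ker_eq_bot']
  intro x hx
  obtain ⟨c, hc⟩ := wedge_spans m x
  -- compute φ x
  have hφx : (0 : W ⊗[ℚ] (Fin m → ℚ)) = ∑ p : Fin m × Fin m,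
      c p • (w p.1 ⊗ₜ[ℚ] (Pi.single p.2 1 : Fin m → ℚ)
        - w p.2 ⊗ₜ[ℚ] (Pi.single p.1 1 : Fin m → ℚ)) := by
    rw [← hx, hc, map_sum]
    simp [hφ']
  -- project to components
  set ψ := TensorProduct.piScalarRightHom ℚ ℚ W (Fin m) with hψ
  have hcomp : ∀ k : Fin m, ∑ i : Fin m, (c (i, k) - c (k, i)) • w i = 0 := by
    intro k
    have h0 := congrArg (fun t => ψ t k) hφx
    simp only [map_zero, map_sum, map_smul, map_sub, hψ,
      TensorProduct.piScalarRightHom_tmul] at h0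
    rw [Fintype.sum_prod_type] at h0
    simp only [Pi.zero_apply, Finset.sum_apply, Pi.smul_apply, Pi.sub_apply,
      Pi.single_apply, smul_sub, ite_smul, one_smul, zero_smul, smul_ite, smul_zero] at h0
    rw [eq_comm] at h0
    simp only [Finset.sum_sub_distrib] at h0
    have hA : ∑ i : Fin m, ∑ j : Fin m, (if k = j then c (i, j) • w i else 0)
        = ∑ i : Fin m, c (i, k) • w i := by simp
    have hB : ∑ i : Fin m, ∑ j : Fin m, (if k = i then c (i, j) • w j else 0)
        = ∑ j : Fin m, c (k, j) • w j := by
      rw [Finset.sum_comm]; simp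
    rw [hA, hB, sub_eq_zero] at h0
    simp [sub_smul, Finset.sum_sub_distrib, h0]
  have hsym : ∀ i k : Fin m, c (i, k) = c (k, i) := by
    intro i k
    have := Fintype.linearIndependent_iff.1 hw (fun i => c (i, k) - c (k, i)) (hcomp k) i
    linarith [this]
  -- conclude x = -x
  have hneg : x = -x := by
    nth_rewrite 2 [hc]
    rw [hc]
    rw [← Finset.sum_neg_distrib]
    refine Fintype.sum_equiv (Equiv.prodComm (Fin m) (Fin m)) _ _ ?_
    intro p
    simp only [Equiv.prodComm_apply, Prod.fst_swap, Prod.snd_swap]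
    rw [wedgeE_antisymm, smul_neg, hsym p.1 p.2]
    rfl
  have h2 : (2 : ℚ) • x = 0 := by
    rw [two_smul]
    nth_rewrite 2 [hneg]
    simp
  rcases smul_eq_zero.1 h2 with h | h
  · norm_num at h
  · exact h
end
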